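/- For n a natural number, define G_n(x_1,...,x_n) = gamma_{n,n} - gamma_{n-2,n} + gamma_{n-4,n} - ... (alternating sum while the first subscript stays nonnegative). Then G_n = F_n as functions on integer tuples, where F_n satisfies F_1(x_1)=x_1 and F_{i+1}(x_1,...,x_{i+1}) = F_i(x_1,...,x_i - 1) + (x_{i+1}-1)*F_i(x_1,...,x_i). -/
import Mathlib

/-- `Cset i j`: the set of `i`-element subsets `I ⊆ {1,...,j}` such that any two consecutive
elements of `I` differ by an odd number, and `j - max I` is even. -/
def Cset (i j : ℕ) : Finset (Finset ℕ) :=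
  (Finset.Icc 1 j).powerset.filter fun I =>
    I.card = i ∧
    (∀ a ∈ I, ∀ b ∈ I, a < b → (∀ t ∈ Finset.Ioo a b, t ∉ I) → Odd (b - a)) ∧
    (∀ a ∈ I, (∀ b ∈ I, b ≤ a) → Even (j - a))

/-- `A_{i,j}`: members of `C_{i,j}` not containing `j`. -/
def Aset (i j : ℕ) : Finset (Finset ℕ) := (Cset i j).filter fun I => j ∉ I

/-- `B_{i,j}`: members of `C_{i,j}` containing `j`. -/
def Bset (i j : ℕ) : Finset (Finset ℕ) := (Cset i j).filter fun I => j ∈ I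

def gamma (i j : ℕ) (x : ℕ → ℤ) : ℤ := ∑ I ∈ Cset i j, ∏ t ∈ I, x t

def alpha (i j : ℕ) (x : ℕ → ℤ) : ℤ := ∑ I ∈ Aset i j, ∏ t ∈ I, x t

def beta (i j : ℕ) (x : ℕ → ℤ) : ℤ := ∑ I ∈ Bset i j, ∏ t ∈ I, x t

/-- `betaP i j` is `beta_{i,j}` with the last variable `x_j` specialized to `1`. -/
def betaP (i j : ℕ) (x : ℕ → ℤ) : ℤ := beta i j (Function.update x j 1)

/-- `F [x_n, ..., x_1]` is `F_n(x_1,...,x_n)` (arguments reversed). -/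
def F : List ℤ → ℤ
  | [] => 0
  | [x] => x
  | x :: y :: ys => F ((y - 1) :: ys) + (x - 1) * F (y :: ys)
termination_by l => l.length
decreasing_by all_goals simp

/-- `G n x = γ_{n,n} - γ_{n-2,n} + γ_{n-4,n} - ...` while the first index is nonnegative. -/
def G (n : ℕ) (x : ℕ → ℤ) : ℤ := ∑ k ∈ Finset.range (n / 2 + 1), (-1) ^ k * gamma (n - 2 * k) n x

lemma mem_Cset {I : Finset ℕ} {i j : ℕ} :
    I ∈ Cset i j ↔ I ⊆ Finset.Icc 1 j ∧ I.card = i ∧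
      (∀ a ∈ I, ∀ b ∈ I, a < b → (∀ t ∈ Finset.Ioo a b, t ∉ I) → Odd (b - a)) ∧
      (∀ a ∈ I, (∀ b ∈ I, b ≤ a) → Even (j - a)) := by
  simp only [Cset, Finset.mem_filter, Finset.mem_powerset]

lemma Cset_zero (j : ℕ) : Cset 0 j = {∅} := by
  ext I
  simp only [mem_Cset, Finset.mem_singleton, Finset.card_eq_zero]
  constructor
  · rintro ⟨-, h, -⟩; exact h
  · rintro rfl; simp

lemma gamma_zero (j : ℕ) (x : ℕ → ℤ) : gamma 0 j x = 1 := by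
  rw [gamma, Cset_zero]; simp

lemma Cset_large {i j : ℕ} (h : j < i) : Cset i j = ∅ := by
  ext I
  simp only [mem_Cset, Finset.notMem_empty, iff_false, not_and]
  intro hsub hcard
  have h1 := Finset.card_le_card hsub
  rw [Nat.card_Icc] at h1
  omega

lemma gamma_large {i j : ℕ} (h : j < i) (x : ℕ → ℤ) : gamma i j x = 0 := by
  rw [gamma, Cset_large h, Finset.sum_empty]

lemma Aset_eq {i j : ℕ} (hi : 1 ≤ i) (hj : 2 ≤ j) : Aset i j = Cset i (j - 2) := by
  ext I
  simp only [Aset, Finset.mem_filter, mem_Cset]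
  constructor
  · rintro ⟨⟨hsub, hcard, h2, h3⟩, hjI⟩
    have hne : I.Nonempty := Finset.card_pos.mp (by omega)
    have hmI : I.max' hne ∈ I := I.max'_mem hne
    have hmax : ∀ b ∈ I, b ≤ I.max' hne := fun b hb => I.le_max' b hb
    obtain ⟨r, hr⟩ := h3 _ hmI hmax
    have hmj : I.max' hne ≤ j := (Finset.mem_Icc.mp (hsub hmI)).2
    have hmne : I.max' hne ≠ j := fun h => hjI (h ▸ hmI)
    refine ⟨?_, hcard, h2, ?_⟩
    · intro a ha
      have h1 := Finset.mem_Icc.mp (hsub ha)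
      have h2' := hmax a ha
      exact Finset.mem_Icc.mpr ⟨h1.1, by omega⟩
    · intro a ha hamax
      have ham : a = I.max' hne := le_antisymm (hmax a ha) (hamax _ hmI)
      subst ham
      exact ⟨r - 1, by omega⟩
  · rintro ⟨hsub, hcard, h2, h3⟩
    have hsub' : I ⊆ Finset.Icc 1 j := fun a ha => by
      have h1 := Finset.mem_Icc.mp (hsub ha)
      exact Finset.mem_Icc.mpr ⟨h1.1, by omega⟩
    have hjI : j ∉ I := fun h => by have := Finset.mem_Icc.mp (hsub h); omega
    refine ⟨⟨hsub', hcard, h2, ?_⟩, hjI⟩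
    intro a ha hamax
    obtain ⟨r, hr⟩ := h3 a ha hamax
    have := Finset.mem_Icc.mp (hsub ha)
    exact ⟨r + 1, by omega⟩

lemma beta_eq {i j : ℕ} (hi : 1 ≤ i) (hj : 1 ≤ j) (x : ℕ → ℤ) :
    ∑ I ∈ Bset i j, ∏ t ∈ I, x t = x j * gamma (i - 1) (j - 1) x := by
  rw [gamma, Finset.mul_sum]
  refine Finset.sum_nbij' (fun I => I.erase j) (fun I => insert j I) ?_ ?_ ?_ ?_ ?_
  · -- forward membership
    intro I hI
    simp only [Bset, Finset.mem_filter, mem_Cset] at hI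
    obtain ⟨⟨hsub, hcard, h2, h3⟩, hjI⟩ := hI
    rw [mem_Cset]
    refine ⟨?_, ?_, ?_, ?_⟩
    · intro a ha
      obtain ⟨hane, haI⟩ := Finset.mem_erase.mp ha
      have h1 := Finset.mem_Icc.mp (hsub haI)
      exact Finset.mem_Icc.mpr ⟨h1.1, by omega⟩
    · rw [Finset.card_erase_of_mem hjI, hcard]
    · intro a ha b hb hab hgap
      obtain ⟨hane, haI⟩ := Finset.mem_erase.mp ha
      obtain ⟨hbne, hbI⟩ := Finset.mem_erase.mp hb
      refine h2 a haI b hbI hab ?_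
      intro t ht htI
      have hbj := (Finset.mem_Icc.mp (hsub hbI)).2
      have htb := (Finset.mem_Ioo.mp ht).2
      exact hgap t ht (Finset.mem_erase.mpr ⟨by omega, htI⟩)
    · intro a ha hamax
      obtain ⟨hane, haI⟩ := Finset.mem_erase.mp ha
      have haj : a ≤ j := (Finset.mem_Icc.mp (hsub haI)).2
      have haj' : a < j := lt_of_le_of_ne haj hane
      have hodd : Odd (j - a) := by
        refine h2 a haI j hjI haj' ?_
        intro t ht htI
        obtain ⟨hta, htj⟩ := Finset.mem_Ioo.mp ht
        have := hamax t (Finset.mem_erase.mpr ⟨by omega, htI⟩)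
        omega
      obtain ⟨r, hr⟩ := hodd
      exact ⟨r, by omega⟩
  · -- backward membership
    intro I hI
    rw [mem_Cset] at hI
    obtain ⟨hsub, hcard, h2, h3⟩ := hI
    have hjI : j ∉ I := fun h => by have := Finset.mem_Icc.mp (hsub h); omega
    simp only [Bset, Finset.mem_filter, mem_Cset]
    refine ⟨⟨?_, ?_, ?_, ?_⟩, Finset.mem_insert_self j I⟩
    · intro a ha
      rcases Finset.mem_insert.mp ha with rfl | h
      · exact Finset.mem_Icc.mpr ⟨hj, le_refl _⟩
      · have h1 := Finset.mem_Icc.mp (hsub h)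
        exact Finset.mem_Icc.mpr ⟨h1.1, by omega⟩
    · rw [Finset.card_insert_of_notMem hjI, hcard]; omega
    · intro a ha b hb hab hgap
      rcases Finset.mem_insert.mp hb with rfl | hbI
      · -- b = j
        have haI : a ∈ I := by
          rcases Finset.mem_insert.mp ha with rfl | h
          · omega
          · exact h
        have hamax : ∀ c ∈ I, c ≤ a := by
          intro c hc
          by_contra hlt
          push_neg at hlt
          have hcj := (Finset.mem_Icc.mp (hsub hc)).2
          exact hgap c (Finset.mem_Ioo.mpr ⟨hlt, by omega⟩) (Finset.mem_insert_of_mem hc)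
        obtain ⟨r, hr⟩ := h3 a haI hamax
        have haj := (Finset.mem_Icc.mp (hsub haI)).2
        exact ⟨r, by omega⟩
      · -- b ∈ I
        have hbj := (Finset.mem_Icc.mp (hsub hbI)).2
        have haI : a ∈ I := by
          rcases Finset.mem_insert.mp ha with rfl | h
          · omega
          · exact h
        refine h2 a haI b hbI hab ?_
        intro t ht htI
        exact hgap t ht (Finset.mem_insert_of_mem htI)
    · intro a ha hamax
      have hja : j ≤ a := hamax j (Finset.mem_insert_self j I)
      have haj : a ≤ j := by
        rcases Finset.mem_insert.mp ha with rfl | h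
        · exact le_refl _
        · have := (Finset.mem_Icc.mp (hsub h)).2; omega
      have : a = j := le_antisymm haj hja
      subst this
      simp
  · intro I hI
    simp only [Bset, Finset.mem_filter] at hI
    exact Finset.insert_erase hI.2
  · intro I hI
    rw [mem_Cset] at hI
    have hjI : j ∉ I := fun h => by have := Finset.mem_Icc.mp (hI.1 h); omega
    exact Finset.erase_insert hjI
  · intro I hI
    simp only [Bset, Finset.mem_filter] at hI
    exact (Finset.mul_prod_erase I x hI.2).symm

lemma gamma_rec {i j : ℕ} (hi : 1 ≤ i) (hj : 2 ≤ j) (x : ℕ → ℤ) :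
    gamma i j x = gamma i (j - 2) x + x j * gamma (i - 1) (j - 1) x := by
  have hsplit := Finset.sum_filter_add_sum_filter_not (Cset i j) (fun I => j ∈ I)
    (fun I => ∏ t ∈ I, x t)
  have hB : ∑ I ∈ Bset i j, ∏ t ∈ I, x t = x j * gamma (i - 1) (j - 1) x :=
    beta_eq hi (by omega) x
  have hA : ∑ I ∈ Aset i j, ∏ t ∈ I, x t = gamma i (j - 2) x := by
    rw [Aset_eq hi hj]; rfl
  rw [gamma, ← hsplit]
  have e1 : Finset.filter (fun I => j ∈ I) (Cset i j) = Bset i j := rfl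
  have e2 : Finset.filter (fun I => ¬ j ∈ I) (Cset i j) = Aset i j := rfl
  rw [e1, e2, hA, hB]
  ring

lemma G_zero (x : ℕ → ℤ) : G 0 x = 1 := by
  simp [G, gamma_zero]

lemma G_one (x : ℕ → ℤ) : G 1 x = x 1 := by
  have h1 : Cset 1 1 = {{1}} := by decide
  simp [G, gamma, h1]

lemma G_rec {n : ℕ} (hn : 2 ≤ n) (x : ℕ → ℤ) :
    G n x = x n * G (n - 1) x - G (n - 2) x := by
  have key : ∀ k ∈ Finset.range (n / 2 + 1),
      (-1 : ℤ) ^ k * gamma (n - 2 * k) n x =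
      (-1) ^ k * gamma (n - 2 * k) (n - 2) x +
      (if 2 * k < n then x n * ((-1) ^ k * gamma (n - 1 - 2 * k) (n - 1) x) else 0) := by
    intro k hk
    rw [Finset.mem_range] at hk
    by_cases h : 2 * k < n
    · rw [if_pos h, gamma_rec (by omega) (by omega)]
      rw [show n - 2 * k - 1 = n - 1 - 2 * k by omega]
      ring
    · rw [if_neg h]
      have h1 : n - 2 * k = 0 := by omega
      rw [h1, gamma_zero, gamma_zero]
      ring
  rw [G, Finset.sum_congr rfl key, Finset.sum_add_distrib]
  have hfirst : ∑ k ∈ Finset.range (n / 2 + 1), (-1 : ℤ) ^ k * gamma (n - 2 * k) (n - 2) x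
      = -G (n - 2) x := by
    rw [show n / 2 + 1 = ((n - 2) / 2 + 1) + 1 by omega,
      Finset.sum_range_succ' (fun k => (-1 : ℤ) ^ k * gamma (n - 2 * k) (n - 2) x)]
    have hterm : ∀ k ∈ Finset.range ((n - 2) / 2 + 1),
        (-1 : ℤ) ^ (k + 1) * gamma (n - 2 * (k + 1)) (n - 2) x
        = -((-1) ^ k * gamma ((n - 2) - 2 * k) (n - 2) x) := by
      intro k hk
      rw [show n - 2 * (k + 1) = (n - 2) - 2 * k by omega, pow_succ]
      ring
    rw [Finset.sum_congr rfl hterm, Finset.sum_neg_distrib]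
    simp only [Nat.mul_zero, Nat.sub_zero, pow_zero, one_mul]
    rw [gamma_large (by omega), G]
    ring
  have hsecond : ∑ k ∈ Finset.range (n / 2 + 1),
      (if 2 * k < n then x n * ((-1 : ℤ) ^ k * gamma (n - 1 - 2 * k) (n - 1) x) else 0)
      = x n * G (n - 1) x := by
    rw [G, Finset.mul_sum]
    rw [← Finset.sum_subset (Finset.range_subset_range.mpr (show (n - 1) / 2 + 1 ≤ n / 2 + 1 by omega))
      (fun k hk hk2 => by
        rw [Finset.mem_range] at hk
        rw [Finset.mem_range] at hk2
        rw [if_neg (by omega)])]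
    refine Finset.sum_congr rfl fun k hk => ?_
    rw [Finset.mem_range] at hk
    rw [if_pos (by omega)]
  rw [hfirst, hsecond]
  ring

def L (x : ℕ → ℤ) (n : ℕ) : List ℤ := (List.range n).map fun t => x (n - t)

lemma L_succ (x : ℕ → ℤ) (n : ℕ) : L x (n + 1) = x (n + 1) :: L x n := by
  rw [L, List.range_succ_eq_map]
  simp [L, Function.comp]

lemma F_three (a b c : ℤ) (l : List ℤ) :
    F (a :: b :: c :: l) = a * F (b :: c :: l) - F (c :: l) := by
  simp only [F]
  ring

lemma G_eq_F_aux (x : ℕ → ℤ) : ∀ n : ℕ, 1 ≤ n → G n x = F (L x n) := by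
  intro n
  induction n using Nat.strong_induction_on with
  | _ n ih =>
    intro hn
    match n, hn with
    | 1, _ =>
      rw [G_one, show L x 1 = [x 1] by simp [L, List.range_succ], F]
    | 2, _ =>
      rw [G_rec (by omega), show (2 : ℕ) - 1 = 1 from rfl, show (2 : ℕ) - 2 = 0 from rfl,
        G_one, G_zero, show L x 2 = [x 2, x 1] by simp [L, List.range_succ]]
      simp only [F]
      ring
    | (m + 3), _ =>
      rw [G_rec (by omega), show m + 3 - 1 = m + 2 from rfl, show m + 3 - 2 = m + 1 from rfl,
        ih (m + 2) (by omega) (by omega), ih (m + 1) (by omega) (by omega),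
        show L x (m + 3) = x (m + 3) :: x (m + 2) :: x (m + 1) :: L x m from by
          rw [show m + 3 = (m + 2) + 1 from rfl, L_succ, show m + 2 = (m + 1) + 1 from rfl,
            L_succ, L_succ],
        F_three]
      rw [show L x (m + 2) = x (m + 2) :: x (m + 1) :: L x m from by
          rw [show m + 2 = (m + 1) + 1 from rfl, L_succ, L_succ],
        show L x (m + 1) = x (m + 1) :: L x m from L_succ x m]

theorem G_eq_F (n : ℕ) (hn : 1 ≤ n) (x : ℕ → ℤ) :
    G n x = F ((List.range n).map fun t => x (n - t)) := G_eq_F_aux x n hn
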